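/- Let k ≥ 3 and Σ = {a₁,…,a_k}. For every pattern α ∈ Π_DB(k), the 1-uniform morphism σ : ℕ* → Σ* defined by σ(x) = a_j for every x ∈ N_j is unambiguous with respect to α. -/

import Mathlib

/-!
A variable `x` of `α` occurs twice, so `τ x` occurs twice as a factor of `τ(α) = w`. If `|τ x| ≥ 2`,
its length-2 prefix would occur twice in `w`, contradicting the de Bruijn property; hence every
`|τ x| ≤ 1`. Since `|τ(α)| = |α|`, no image is empty, and reading `τ(α) = σ(α)` letter by letter
gives `τ x = σ x`.
-/

/-- A word w over `Fin k` is a non-cyclic de Bruijn sequence of order 2 if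
every length-2 word over `Fin k` occurs in w exactly once as a factor. -/
def IsDeBruijn2 {k : ℕ} (w : List (Fin k)) : Prop :=
  ∀ v : List (Fin k), v.length = 2 →
    ∃! p : ℕ, p + 2 ≤ w.length ∧ (w.drop p).take 2 = v

namespace List

variable {α β : Type*}

theorem exists_eq_append_cons_append_cons_of_two_le_count [DecidableEq α] {x : α} {l : List α}
    (h : 2 ≤ l.count x) : ∃ a b c, l = a ++ x :: b ++ x :: c := by
  have hsub : [x, x] <+ l := duplicate_iff_sublist.mp (duplicate_iff_two_le_count.mpr h)
  obtain ⟨r₁, r₂, rfl, hx₁, hx₂⟩ := cons_sublist_iff.mp hsub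
  obtain ⟨a, b, rfl⟩ := append_of_mem hx₁
  obtain ⟨b', c, rfl⟩ := append_of_mem (hx₂.subset (mem_singleton_self x))
  exact ⟨a, b ++ b', c, by simp⟩

theorem take_two_drop_length_eq_of_eq_append {w p u s : List α} (hu : 2 ≤ u.length)
    (hw : w = p ++ u ++ s) : p.length + 2 ≤ w.length ∧ (w.drop p.length).take 2 = u.take 2 := by
  subst hw
  refine ⟨by simp; omega, ?_⟩
  rw [append_assoc, drop_left, take_append, Nat.sub_eq_zero_of_le hu, take_zero, append_nil]

theorem length_flatMap_le_length {τ : α → List β} {l : List α}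
    (h : ∀ x ∈ l, (τ x).length ≤ 1) : (l.flatMap τ).length ≤ l.length := by
  rw [length_flatMap]
  simpa using sum_le_card_nsmul (l.map fun x => (τ x).length) 1 (by simpa using h)

theorem eq_singleton_of_flatMap_eq_map {τ : α → List β} {g : α → β} :
    ∀ {l : List α}, (∀ x ∈ l, (τ x).length ≤ 1) → l.flatMap τ = l.map g →
      ∀ x ∈ l, τ x = [g x]
  | [], _, _ => by simp
  | a :: t, hshort, heq => by
    have htail : ∀ x ∈ t, (τ x).length ≤ 1 := fun x hx => hshort x (mem_cons_of_mem a hx)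
    rw [flatMap_cons, map_cons] at heq
    match hτa : τ a, hshort a mem_cons_self with
    | [], _ =>
      rw [hτa, nil_append] at heq
      have hlen := length_flatMap_le_length htail
      rw [heq, length_cons, length_map] at hlen
      omega
    | [c], _ =>
      rw [hτa, singleton_append, cons.injEq] at heq
      rintro x (_ | ⟨_, hx⟩)
      · rw [hτa, heq.1]
      · exact eq_singleton_of_flatMap_eq_map htail heq.2 x hx

end List

theorem IsDeBruijn2.length_le_one_of_eq_append {k : ℕ} {w : List (Fin k)} (hdb : IsDeBruijn2 w)
    {a u b c : List (Fin k)} (hw : w = a ++ u ++ b ++ u ++ c) : u.length ≤ 1 := by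
  by_contra! hu
  obtain ⟨p, -, hp⟩ := hdb (u.take 2) (by simp; omega)
  have h₁ := hp _ (List.take_two_drop_length_eq_of_eq_append hu (p := a) (s := b ++ u ++ c)
    (by simp [hw]))
  have h₂ := hp _ (List.take_two_drop_length_eq_of_eq_append hu (p := a ++ u ++ b) (s := c)
    (by simp [hw]))
  simp only [List.length_append] at h₂
  omega

theorem stmt_17_general (k : ℕ) (α : List ℕ)
    (w : List (Fin k)) (f : ℕ → Fin k) (hdb : IsDeBruijn2 w)
    (hw : α.map f = w) (hcount : ∀ x ∈ α, 2 ≤ α.count x) :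
    ∀ τ : ℕ → List (Fin k),
      α.flatMap τ = α.flatMap (fun x => [f x]) →
        ∀ x ∈ α, τ x = [f x] := by
  intro τ hτ
  rw [← List.map_eq_flatMap] at hτ
  have hshort : ∀ x ∈ α, (τ x).length ≤ 1 := by
    intro x hx
    obtain ⟨a, b, c, hα⟩ := List.exists_eq_append_cons_append_cons_of_two_le_count (hcount x hx)
    exact hdb.length_le_one_of_eq_append (a := a.flatMap τ) (b := b.flatMap τ)
      (c := c.flatMap τ) (by rw [← hw, ← hτ, hα]; simp)
  exact List.eq_singleton_of_flatMap_eq_map hshort hτ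

/-- Let k ≥ 3 and let α ∈ Π_DB(k) arise from a non-cyclic de Bruijn sequence
w of order 2 over `Fin k` via the letter-assignment f : ℕ → Fin k (each
variable of α occurring at least twice, with ⌊n_j/2⌋ variables assigned to
the letter j). Then the 1-uniform morphism σ(x) = f(x) is unambiguous with
respect to α. -/
theorem stmt_17 (k : ℕ) (hk : 3 ≤ k) (α : List ℕ)
    (w : List (Fin k)) (f : ℕ → Fin k) (hdb : IsDeBruijn2 w)
    (hw : α.map f = w) (hcount : ∀ x ∈ α, 2 ≤ α.count x)
    (hvars : ∀ j : Fin k,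
      (α.toFinset.filter (fun x => f x = j)).card = w.count j / 2) :
    ∀ τ : ℕ → List (Fin k),
      α.flatMap τ = α.flatMap (fun x => [f x]) →
        ∀ x ∈ α, τ x = [f x] :=
  stmt_17_general k α w f hdb hw hcount
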